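/- arXiv:2102.04245 — 2 statements merged into one kernel-verified Lean document; each statement's English description precedes it below -/
import Mathlib

section
/- Let IS_Y be an implicational base over Y with closure operator cl_Y and closure system C_Y. Let U = Y ∪ {u, v} with u, v ∉ Y distinct, IS = IS_Y ∪ {Y → {u,v}}, with closure operator cl, and let the inconsistency graph have the single edge uv. Then the maximal consistent closed sets of IS with respect to this graph are exactly the sets C ∪ {u} and C ∪ {v} where C ranges over the co-atoms of C_Y. -/
/-- `F` models the implicational base `IS`. -/
def Models {α : Type*} (IS : Set (Set α × Set α)) (F : Set α) : Prop :=
  ∀ p ∈ IS, p.1 ⊆ F → p.2 ⊆ F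

/-- Closure operator of the implicational base `ISY` over the ground set `Y`. -/
def clY {α : Type*} (ISY : Set (Set α × Set α)) (Y : Set α) (A : Set α) : Set α :=
  ⋂₀ {F : Set α | F ⊆ Y ∧ Models ISY F ∧ A ⊆ F}

lemma clY_ext {α : Type*} (ISY : Set (Set α × Set α)) (Y A : Set α) :
    A ⊆ clY ISY Y A :=
  fun _ hx _ hF => hF.2.2 hx

lemma clY_min {α : Type*} {ISY : Set (Set α × Set α)} {Y A F : Set α}
    (h1 : F ⊆ Y) (h2 : Models ISY F) (h3 : A ⊆ F) : clY ISY Y A ⊆ F :=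
  Set.sInter_subset_of_mem ⟨h1, h2, h3⟩

lemma models_Y {α : Type*} {ISY : Set (Set α × Set α)} {Y : Set α}
    (hISY : ∀ p ∈ ISY, p.1 ⊆ Y ∧ p.2 ⊆ Y) : Models ISY Y :=
  fun p hp _ => (hISY p hp).2

lemma models_clY {α : Type*} (ISY : Set (Set α × Set α)) (Y A : Set α) :
    Models ISY (clY ISY Y A) := by
  intro p hp hsub x hx F hF
  exact hF.2.1 p hp (fun y hy => hsub hy F hF) hx

lemma fwd_aux {α : Type*}
    (Y : Set α) (u v : α) (hu : u ∉ Y) (hv : v ∉ Y) (huv : u ≠ v)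
    (ISY : Set (Set α × Set α)) (hISY : ∀ p ∈ ISY, p.1 ⊆ Y ∧ p.2 ⊆ Y)
    (S : Set α)
    (hsub : S ⊆ Y ∪ {u, v}) (hmod : Models (ISY ∪ {(Y, {u, v})}) S)
    (hcon : ¬ ({u, v} : Set α) ⊆ S)
    (hmax : ∀ T : Set α, T ⊆ Y ∪ {u, v} → Models (ISY ∪ {(Y, {u, v})}) T →
        ¬ ({u, v} : Set α) ⊆ T → S ⊆ T → S = T)
    (hus : u ∈ S) :
    ∃ C : Set α, (C ⊆ Y ∧ clY ISY Y C = C ∧ C ≠ Y ∧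
        ∀ y ∈ Y \ C, clY ISY Y (C ∪ {y}) = Y) ∧ S = C ∪ {u} := by
  have hvs : v ∉ S := by
    intro hvS
    exact hcon (by rintro x (rfl | rfl) <;> assumption)
  set C := S ∩ Y with hC
  have hCY : C ⊆ Y := Set.inter_subset_right
  have hSC : S = C ∪ {u} := by
    ext x
    constructor
    · intro hxS
      rcases hsub hxS with hxY | hx
      · exact Or.inl ⟨hxS, hxY⟩
      · rcases hx with rfl | rfl
        · exact Or.inr rfl
        · exact absurd hxS hvs
    · rintro (hxC | rfl)
      · exact hxC.1
      · exact hus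
  have hmodC : Models ISY C := by
    intro p hp hpC
    have h1 : p.2 ⊆ S := hmod p (Or.inl hp) (hpC.trans Set.inter_subset_left)
    exact Set.subset_inter h1 (hISY p hp).2
  have hclC : clY ISY Y C = C :=
    le_antisymm (clY_min hCY hmodC subset_rfl) (clY_ext ISY Y C)
  have hCneY : C ≠ Y := by
    intro h
    apply hcon
    exact hmod (Y, {u, v}) (Or.inr rfl) (by rw [← h]; exact Set.inter_subset_left)
  refine ⟨C, ⟨hCY, hclC, hCneY, ?_⟩, hSC⟩
  intro y hy
  set D := clY ISY Y (C ∪ {y}) with hD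
  have hDY : D ⊆ Y :=
    clY_min subset_rfl (models_Y hISY) (Set.union_subset hCY (by simpa using hy.1))
  by_contra hne
  -- then T := D ∪ {u} is a strictly larger consistent closed set
  have hYD : ¬ Y ⊆ D := fun h => hne (le_antisymm hDY h)
  set T := D ∪ {u} with hT
  have hTmod : Models (ISY ∪ {(Y, {u, v})}) T := by
    rintro p (hp | hp)
    · intro hpT
      have hp1 : p.1 ⊆ D := by
        intro x hx
        rcases hpT hx with hxD | rfl
        · exact hxD
        · exact absurd ((hISY p hp).1 hx) hu
      exact ((models_clY ISY Y (C ∪ {y})) p hp hp1).trans Set.subset_union_left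
    · simp only [Set.mem_singleton_iff] at hp
      subst hp
      intro hYT
      exfalso
      apply hYD
      intro x hx
      rcases hYT hx with hxD | rfl
      · exact hxD
      · exact absurd hx hu
  have hST : S ⊆ T := by
    rw [hSC]
    apply Set.union_subset
    · exact (Set.subset_union_left.trans (clY_ext ISY Y (C ∪ {y}))).trans
        Set.subset_union_left
    · exact fun x hx => Or.inr hx
  have hTsub : T ⊆ Y ∪ {u, v} := by
    apply Set.union_subset (hDY.trans Set.subset_union_left)
    intro x hx
    exact Or.inr (Or.inl hx)
  have hTcon : ¬ ({u, v} : Set α) ⊆ T := by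
    intro h
    have hvT : v ∈ T := h (Or.inr rfl)
    rcases hvT with hvD | hveq
    · exact hv (hDY hvD)
    · exact huv hveq.symm
  have := hmax T hTsub hTmod hTcon hST
  -- but y ∈ T \ S
  have hyT : y ∈ T := Or.inl (clY_ext ISY Y (C ∪ {y}) (Or.inr rfl))
  have hyS : y ∉ S := by
    rw [hSC]
    rintro (hyC | rfl)
    · exact hy.2 hyC
    · exact hu hy.1
  exact hyS (this ▸ hyT)

lemma bwd_aux {α : Type*}
    (Y : Set α) (u v : α) (hu : u ∉ Y) (hv : v ∉ Y) (huv : u ≠ v)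
    (ISY : Set (Set α × Set α)) (hISY : ∀ p ∈ ISY, p.1 ⊆ Y ∧ p.2 ⊆ Y)
    (C : Set α) (hCY : C ⊆ Y) (hcl : clY ISY Y C = C) (hne : C ≠ Y)
    (hco : ∀ y ∈ Y \ C, clY ISY Y (C ∪ {y}) = Y) :
    C ∪ {u} ⊆ Y ∪ {u, v} ∧ Models (ISY ∪ {(Y, {u, v})}) (C ∪ {u}) ∧
      ¬ ({u, v} : Set α) ⊆ C ∪ {u} ∧
      ∀ T : Set α, T ⊆ Y ∪ {u, v} → Models (ISY ∪ {(Y, {u, v})}) T →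
        ¬ ({u, v} : Set α) ⊆ T → C ∪ {u} ⊆ T → C ∪ {u} = T := by
  have hmodC : Models ISY C := hcl ▸ models_clY ISY Y C
  have hYnot : ¬ Y ⊆ C ∪ {u} := by
    intro h
    apply hne
    refine le_antisymm hCY ?_
    intro x hx
    rcases h hx with hxC | rfl
    · exact hxC
    · exact absurd hx hu
  refine ⟨?_, ?_, ?_, ?_⟩
  · exact Set.union_subset (hCY.trans Set.subset_union_left)
      (fun x hx => Or.inr (Or.inl hx))
  · rintro p (hp | hp)
    · intro hpT
      have hp1 : p.1 ⊆ C := by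
        intro x hx
        rcases hpT hx with hxC | rfl
        · exact hxC
        · exact absurd ((hISY p hp).1 hx) hu
      exact (hmodC p hp hp1).trans Set.subset_union_left
    · simp only [Set.mem_singleton_iff] at hp
      subst hp
      exact fun h => absurd h hYnot
  · intro h
    rcases h (Set.mem_insert_of_mem u rfl) with hvC | hveq
    · exact hv (hCY hvC)
    · exact huv hveq.symm
  · intro T hTsub hTmod hTcon hCT
    refine le_antisymm hCT ?_
    intro t htT
    rcases hTsub htT with htY | ht
    · -- t ∈ Y: show t ∈ C
      by_contra htC
      have htC' : t ∉ C := fun h => htC (Or.inl h)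
      have hclt : clY ISY Y (C ∪ {t}) = Y := hco t ⟨htY, htC'⟩
      have hTY : Models ISY (T ∩ Y) := by
        intro p hp hpT
        exact Set.subset_inter
          ((hTmod p (Or.inl hp)) (hpT.trans Set.inter_subset_left))
          (hISY p hp).2
      have hsub2 : C ∪ {t} ⊆ T ∩ Y := by
        apply Set.union_subset
        · exact Set.subset_inter
            ((Set.subset_union_left.trans hCT)) hCY
        · intro x hx
          rcases hx with rfl
          exact ⟨htT, htY⟩
      have hYT : Y ⊆ T := by
        have := clY_min Set.inter_subset_right hTY hsub2
        rw [hclt] at this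
        exact this.trans Set.inter_subset_left
      exact hTcon (hTmod (Y, {u, v}) (Or.inr rfl) hYT)
    · rcases ht with rfl | rfl
      · exact Or.inr rfl
      · exfalso
        apply hTcon
        rintro x (rfl | rfl)
        · exact hCT (Or.inr rfl)
        · exact htT

theorem stmt_7 {α : Type*} [Fintype α]
    (Y : Set α) (u v : α) (hu : u ∉ Y) (hv : v ∉ Y) (huv : u ≠ v)
    (ISY : Set (Set α × Set α)) (hISY : ∀ p ∈ ISY, p.1 ⊆ Y ∧ p.2 ⊆ Y)
    (IS : Set (Set α × Set α)) (hIS : IS = ISY ∪ {(Y, {u, v})})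
    (S : Set α) :
    -- S is a maximal consistent closed set of IS w.r.t. the graph with edge uv
    (S ⊆ Y ∪ {u, v} ∧ Models IS S ∧ ¬ ({u, v} : Set α) ⊆ S ∧
        ∀ T : Set α, T ⊆ Y ∪ {u, v} → Models IS T → ¬ ({u, v} : Set α) ⊆ T →
          S ⊆ T → S = T) ↔
      -- iff S = C ∪ {u} or C ∪ {v} for a co-atom C of the closure system of ISY
      (∃ C : Set α, (C ⊆ Y ∧ clY ISY Y C = C ∧ C ≠ Y ∧
          ∀ y ∈ Y \ C, clY ISY Y (C ∪ {y}) = Y) ∧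
        (S = C ∪ {u} ∨ S = C ∪ {v})) := by
  subst hIS
  constructor
  · rintro ⟨hsub, hmod, hcon, hmax⟩
    have hor : u ∈ S ∨ v ∈ S := by
      by_contra h
      push_neg at h
      obtain ⟨husn, hvsn⟩ := h
      set T := S ∪ {u} with hT
      have hTmod : Models (ISY ∪ {(Y, {u, v})}) T := by
        rintro p (hp | hp)
        · intro hpT
          have hp1 : p.1 ⊆ S := by
            intro x hx
            rcases hpT hx with hxS | rfl
            · exact hxS
            · exact absurd ((hISY p hp).1 hx) hu
          exact (hmod p (Or.inl hp) hp1).trans Set.subset_union_left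
        · simp only [Set.mem_singleton_iff] at hp
          subst hp
          intro hYT
          exfalso
          have hYS : Y ⊆ S := by
            intro x hx
            rcases hYT hx with hxS | rfl
            · exact hxS
            · exact absurd hx hu
          exact hcon (hmod (Y, {u, v}) (Or.inr rfl) hYS)
      have hTsub : T ⊆ Y ∪ {u, v} :=
        Set.union_subset hsub (fun x hx => Or.inr (Or.inl hx))
      have hTcon : ¬ ({u, v} : Set α) ⊆ T := by
        intro h
        rcases h (Set.mem_insert_of_mem u rfl) with hvS | hveq
        · exact hvsn hvS
        · exact huv hveq.symm
      have := hmax T hTsub hTmod hTcon Set.subset_union_left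
      exact husn (this ▸ (Or.inr rfl : u ∈ T))
    rcases hor with hus | hvs
    · obtain ⟨C, hC, hSC⟩ := fwd_aux Y u v hu hv huv ISY hISY S hsub hmod hcon hmax hus
      exact ⟨C, hC, Or.inl hSC⟩
    · rw [Set.pair_comm u v] at hsub hmod hcon hmax
      obtain ⟨C, hC, hSC⟩ := fwd_aux Y v u hv hu huv.symm ISY hISY S hsub hmod hcon hmax hvs
      exact ⟨C, hC, Or.inr hSC⟩
  · rintro ⟨C, ⟨hCY, hcl, hne, hco⟩, hS | hS⟩ <;> subst hS
    · exact bwd_aux Y u v hu hv huv ISY hISY C hCY hcl hne hco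
    · rw [Set.pair_comm u v]
      exact bwd_aux Y v u hv hu huv.symm ISY hISY C hCY hcl hne hco
end

section
/- In the closure system C over U = {x_1,…,x_n, y_1,…,y_n, u, v} defined by the implicational base IS = {x_i → y_i : i ∈ [n]} ∪ {{y_1,…,y_n} → {u,v}}, the non-trivial minimal generators of u are exactly the sets {z_1, …, z_n} with z_i ∈ {x_i, y_i} for each i; in particular u has exactly 2^n non-trivial minimal generators. -/
/-- The closure operator of the implicational base `IS`. -/
def phi {α : Type*} (IS : Set (Set α × Set α)) (A : Set α) : Set α :=
  ⋂₀ {F : Set α | Models IS F ∧ A ⊆ F}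

theorem stmt_16 {α : Type*} [Fintype α] (n : ℕ)
    (x y : Fin n → α) (u v : α)
    (hx : Function.Injective x) (hy : Function.Injective y)
    (hxy : ∀ i j : Fin n, x i ≠ y j)
    (hux : ∀ i : Fin n, u ≠ x i) (huy : ∀ i : Fin n, u ≠ y i)
    (hvx : ∀ i : Fin n, v ≠ x i) (hvy : ∀ i : Fin n, v ≠ y i)
    (huv : u ≠ v)
    (IS : Set (Set α × Set α))
    (hIS : IS = {p : Set α × Set α | ∃ i : Fin n, p = ({x i}, {y i})} ∪
      {(Set.range y, {u, v})}) :
    -- the non-trivial minimal generators of u are exactly the transversals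
    {A : Set α | (u ∈ phi IS A ∧ ∀ B : Set α, B ⊂ A → u ∉ phi IS B) ∧ A ≠ {u}} =
      {A : Set α | ∃ z : Fin n → α, (∀ i : Fin n, z i = x i ∨ z i = y i) ∧
        A = Set.range z} ∧
    -- in particular, u has exactly 2 ^ n non-trivial minimal generators
    {A : Set α | (u ∈ phi IS A ∧ ∀ B : Set α, B ⊂ A → u ∉ phi IS B) ∧ A ≠ {u}}.ncard
      = 2 ^ n := by
  classical
  -- membership facts about IS
  have hmem1 : ∀ i : Fin n, (({x i}, {y i}) : Set α × Set α) ∈ IS := by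
    intro i; rw [hIS]; exact Or.inl ⟨i, rfl⟩
  have hmem2 : ((Set.range y, {u, v}) : Set α × Set α) ∈ IS := by
    rw [hIS]; exact Or.inr rfl
  have hform : ∀ p ∈ IS, (∃ i : Fin n, p = ({x i}, {y i})) ∨
      p = (Set.range y, {u, v}) := by
    intro p hp; rw [hIS] at hp
    rcases hp with h | h
    · exact Or.inl h
    · exact Or.inr h
  -- the transversality predicate
  set P : Set α → Prop := fun A => ∀ i : Fin n, x i ∈ A ∨ y i ∈ A with hPdef
  -- the explicit closure
  set cl : Set α → Set α := fun A =>
    {a | a ∈ A ∨ (∃ i : Fin n, x i ∈ A ∧ a = y i) ∨ (P A ∧ (a = u ∨ a = v))}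
    with hcldef
  have hcl_mem : ∀ (A : Set α) (a : α), a ∈ cl A ↔
      a ∈ A ∨ (∃ i : Fin n, x i ∈ A ∧ a = y i) ∨ (P A ∧ (a = u ∨ a = v)) := by
    intro A a; rfl
  have hcl_model : ∀ A : Set α, Models IS (cl A) := by
    intro A p hp hpre
    rcases hform p hp with ⟨i, rfl⟩ | rfl
    · -- premise {x i} ⊆ cl A
      have hxi : x i ∈ cl A := hpre rfl
      have hxiA : x i ∈ A := by
        rcases (hcl_mem A (x i)).1 hxi with h | ⟨j, _, hj⟩ | ⟨_, h | h⟩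
        · exact h
        · exact absurd hj (hxy i j)
        · exact absurd h.symm (hux i)
        · exact absurd h.symm (hvx i)
      intro a ha
      rw [Set.mem_singleton_iff] at ha
      subst ha
      exact (hcl_mem A (y i)).2 (Or.inr (Or.inl ⟨i, hxiA, rfl⟩))
    · -- premise range y ⊆ cl A
      have hPA : P A := by
        intro i
        have hyi : y i ∈ cl A := hpre ⟨i, rfl⟩
        rcases (hcl_mem A (y i)).1 hyi with h | ⟨j, hj, hj'⟩ | ⟨_, h | h⟩
        · exact Or.inr h
        · have : j = i := hy hj'.symm
          exact Or.inl (this ▸ hj)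
        · exact absurd h.symm (huy i)
        · exact absurd h.symm (hvy i)
      intro a ha
      rcases ha with rfl | ha
      · exact (hcl_mem A a).2 (Or.inr (Or.inr ⟨hPA, Or.inl rfl⟩))
      · rw [Set.mem_singleton_iff] at ha
        subst ha
        exact (hcl_mem A a).2 (Or.inr (Or.inr ⟨hPA, Or.inr rfl⟩))
  have hcl_sub : ∀ (A F : Set α), Models IS F → A ⊆ F → cl A ⊆ F := by
    intro A F hF hAF a ha
    rcases (hcl_mem A a).1 ha with h | ⟨i, hi, rfl⟩ | ⟨hPA, h⟩
    · exact hAF h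
    · exact hF _ (hmem1 i) (Set.singleton_subset_iff.2 (hAF hi)) rfl
    · have hry : Set.range y ⊆ F := by
        rintro b ⟨i, rfl⟩
        rcases hPA i with hx' | hy'
        · exact hF _ (hmem1 i) (Set.singleton_subset_iff.2 (hAF hx')) rfl
        · exact hAF hy'
      have huvF := hF _ hmem2 hry
      rcases h with rfl | rfl
      · exact huvF (Or.inl rfl)
      · exact huvF (Or.inr rfl)
  have hphi : ∀ A : Set α, phi IS A = cl A := by
    intro A
    apply Set.Subset.antisymm
    · exact Set.sInter_subset_of_mem ⟨hcl_model A, fun a ha => (hcl_mem A a).2 (Or.inl ha)⟩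
    · intro a ha
      exact Set.mem_sInter.2 fun F hF => hcl_sub A F hF.1 hF.2 ha
  have hu_mem : ∀ A : Set α, u ∈ phi IS A ↔ u ∈ A ∨ P A := by
    intro A
    rw [hphi]
    constructor
    · intro h
      rcases (hcl_mem A u).1 h with h | ⟨i, _, h⟩ | ⟨hPA, _⟩
      · exact Or.inl h
      · exact absurd h (huy i)
      · exact Or.inr hPA
    · rintro (h | h)
      · exact (hcl_mem A u).2 (Or.inl h)
      · exact (hcl_mem A u).2 (Or.inr (Or.inr ⟨h, Or.inl rfl⟩))
  -- the main set equality
  have hSeq : {A : Set α | (u ∈ phi IS A ∧ ∀ B : Set α, B ⊂ A → u ∉ phi IS B) ∧ A ≠ {u}} =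
      {A : Set α | ∃ z : Fin n → α, (∀ i : Fin n, z i = x i ∨ z i = y i) ∧
        A = Set.range z} := by
    ext A
    simp only [Set.mem_setOf_eq]
    constructor
    · rintro ⟨⟨hgen, hmin⟩, hne⟩
      have huA : u ∉ A := by
        intro h
        have hss : ({u} : Set α) ⊂ A :=
          (Set.singleton_subset_iff.2 h).ssubset_of_ne (Ne.symm hne)
        exact hmin _ hss ((hu_mem _).2 (Or.inl rfl))
      have hPA : P A := by
        rcases (hu_mem A).1 hgen with h | h
        · exact absurd h huA
        · exact h
      set z : Fin n → α := fun i => if x i ∈ A then x i else y i with hzdef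
      have hz : ∀ i : Fin n, z i = x i ∨ z i = y i := by
        intro i
        by_cases h : x i ∈ A
        · exact Or.inl (if_pos h)
        · exact Or.inr (if_neg h)
      have hzA : Set.range z ⊆ A := by
        rintro a ⟨i, rfl⟩
        by_cases h : x i ∈ A
        · rw [show z i = x i from if_pos h]; exact h
        · rw [show z i = y i from if_neg h]
          rcases hPA i with h' | h'
          · exact absurd h' h
          · exact h'
      have hgz : u ∈ phi IS (Set.range z) := by
        refine (hu_mem _).2 (Or.inr fun i => ?_)
        rcases hz i with h | h
        · exact Or.inl ⟨i, h⟩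
        · exact Or.inr ⟨i, h⟩
      have hAz : Set.range z = A := by
        by_contra hne'
        exact hmin _ (hzA.ssubset_of_ne hne') hgz
      exact ⟨z, hz, hAz.symm⟩
    · rintro ⟨z, hz, rfl⟩
      have huA : u ∉ Set.range z := by
        rintro ⟨i, hi⟩
        rcases hz i with h | h
        · exact hux i (hi.symm.trans h)
        · exact huy i (hi.symm.trans h)
      have hPz : P (Set.range z) := by
        intro i
        rcases hz i with h | h
        · exact Or.inl ⟨i, h⟩
        · exact Or.inr ⟨i, h⟩
      refine ⟨⟨(hu_mem _).2 (Or.inr hPz), ?_⟩, ?_⟩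
      · intro B hB hgB
        rcases (hu_mem B).1 hgB with h | h
        · exact huA (hB.1 h)
        · obtain ⟨a, haA, haB⟩ := Set.exists_of_ssubset hB
          obtain ⟨i, rfl⟩ := haA
          rcases h i with hxB | hyB
          · obtain ⟨j, hj⟩ := hB.1 hxB
            rcases hz j with h' | h'
            · have hji : j = i := hx (h'.symm.trans hj)
              subst hji
              exact haB (by rw [h']; exact hxB)
            · exact hxy i j (hj.symm.trans h')
          · obtain ⟨j, hj⟩ := hB.1 hyB
            rcases hz j with h' | h'
            · exact hxy j i (h'.symm.trans hj)
            · have hji : j = i := hy (h'.symm.trans hj)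
              subst hji
              exact haB (by rw [h']; exact hyB)
      · intro hA
        have : u ∈ Set.range z := by rw [hA]; exact rfl
        exact huA this
  refine ⟨hSeq, ?_⟩
  rw [hSeq]
  -- count the transversals
  have hrange : {A : Set α | ∃ z : Fin n → α, (∀ i : Fin n, z i = x i ∨ z i = y i) ∧
      A = Set.range z} =
      Set.range (fun b : Fin n → Bool => Set.range fun i => if b i then x i else y i) := by
    ext A
    simp only [Set.mem_setOf_eq, Set.mem_range]
    constructor
    · rintro ⟨z, hz, rfl⟩
      refine ⟨fun i => decide (z i = x i), ?_⟩
      have hfun : (fun i => if (decide (z i = x i) : Bool) then x i else y i) = z := by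
        funext i
        by_cases h : z i = x i
        · simp [h]
        · rcases hz i with h' | h'
          · exact absurd h' h
          · simp [h, h']
            exact fun he => he.symm
      rw [hfun]
    · rintro ⟨b, rfl⟩
      refine ⟨fun i => if b i then x i else y i, fun i => ?_, rfl⟩
      by_cases h : b i
      · exact Or.inl (if_pos h)
      · exact Or.inr (if_neg h)
  rw [hrange]
  have hinj : Function.Injective
      (fun b : Fin n → Bool => Set.range fun i => if b i then x i else y i) := by
    intro b b' hbb
    simp only at hbb
    funext i
    have h1 : (if b' i then x i else y i) ∈ Set.range (fun j => if b j then x j else y j) := by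
      rw [hbb]; exact ⟨i, rfl⟩
    obtain ⟨j, hj⟩ := h1
    simp only at hj
    by_cases hbi : b' i
    · rw [if_pos hbi] at hj
      by_cases hbj : b j
      · rw [if_pos hbj] at hj
        have : j = i := hx hj
        subst this
        rw [hbj, hbi]
      · rw [if_neg hbj] at hj
        exact absurd hj.symm (hxy i j)
    · rw [if_neg hbi] at hj
      by_cases hbj : b j
      · rw [if_pos hbj] at hj
        exact absurd hj (hxy j i)
      · rw [if_neg hbj] at hj
        have : j = i := hy hj
        subst this
        simp only [Bool.not_eq_true] at hbj hbi
        rw [hbj, hbi]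
  rw [← Set.image_univ, Set.ncard_image_of_injective _ hinj, Set.ncard_univ]
  simp [Nat.card_eq_fintype_card]
end
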